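/- Single swaps under ≼ preserve the enabling, coabstracted-pointer and free-pointer data of a trace: if s, s' ∈ P_𝔄 and s' ≼ s, then enabled_𝔄(s) = enabled_𝔄(s'), cp(s) = cp(s'), and fp(s) = fp(s'). -/
import Mathlib


namespace GameSem

/-! # HRAM nets (Fredriksson–Ghica, "Abstract machines for game semantics, revisited")

Core definitions: interfaces, engines (HRAMs), nets, operational semantics,
traces and denotations, and the category HRAMnet. -/

/-- Polarities of ports / moves. -/
inductive Pol | O | P
deriving DecidableEq

def Pol.dual : Pol → Pol
  | .O => .P
  | .P => .O

/-- Port names (atoms). -/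
abbrev PortName := ℕ
/-- Pointer names (atoms, a separate sort). -/
abbrev PtrName := ℕ

/-- Data items: the empty datum, pointer names, or integers. -/
inductive Data | null | ptr (p : PtrName) | int (z : ℤ)
deriving DecidableEq

/-- An interface: a finite set of polarity-labelled port names (with distinct names),
encoded as the (intended disjoint) finsets of O-labelled and P-labelled port names. -/
structure Interface where
  oports : Finset PortName
  pports : Finset PortName
deriving DecidableEq

namespace Interface

/-- Well-formedness: all port names distinct. -/
def WF (A : Interface) : Prop := Disjoint A.oports A.pports

/-- The support of an interface: its set of port names. -/
def sup (A : Interface) : Finset PortName := A.oports ∪ A.pports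

/-- The dual interface `A*`: all polarities flipped. -/
def dual (A : Interface) : Interface := ⟨A.pports, A.oports⟩

/-- Tensor `A ⊗ B` (union; intended for interfaces of disjoint support). -/
def tensor (A B : Interface) : Interface := ⟨A.oports ∪ B.oports, A.pports ∪ B.pports⟩

/-- Arrow `A ⇒ B := A* ⊗ B`. -/
def arrow (A B : Interface) : Interface := tensor A.dual B

/-- The empty interface. -/
def empty : Interface := ⟨∅, ∅⟩

end Interface

/-- Action of a port-name permutation on an interface. -/
def mapIface (π : Equiv.Perm PortName) (A : Interface) : Interface :=
  ⟨A.oports.image π, A.pports.image π⟩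

/-- `π ⊢ A =_𝔸 B`: the interfaces have the same shape, witnessed by `π`. -/
def IfacePerm (π : Equiv.Perm PortName) (A B : Interface) : Prop :=
  B.oports = A.oports.image π ∧ B.pports = A.pports.image π

/-! ## Code -/

/-- Register indices; `none` permits ignoring results / allocating "null" data. -/
abbrev Reg := Option ℕ

/-- HRAM instructions. -/
inductive Instr
  | new (i j k : Reg)      -- i ← new j,k
  | get (i j k : Reg)      -- i,j ← get k
  | update (i j : Reg)     -- update i,j
  | free (i : Reg)         -- free i
  | flip (i j : Reg)       -- flip i,j
  | set (i : Reg) (v : Data)  -- i ← set v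
deriving DecidableEq

/-- HRAM code fragments. -/
inductive Code
  | seq (ins : Instr) (c : Code)
  | ifzero (i : Reg) (c₁ c₂ : Code)
  | spark (a : PortName)
  | halt                      -- `end`
deriving DecidableEq

/-- Port names occurring in a code fragment (only `spark` contributes names). -/
def Code.sparks : Code → Finset PortName
  | .seq _ c => c.sparks
  | .ifzero _ c₁ c₂ => c₁.sparks ∪ c₂.sparks
  | .spark a => {a}
  | .halt => ∅

/-- Renaming the port names of a code fragment. -/
def Code.rename (π : Equiv.Perm PortName) : Code → Code
  | .seq i c => .seq i (c.rename π)
  | .ifzero i c₁ c₂ => .ifzero i (c₁.rename π) (c₂.rename π)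
  | .spark a => .spark (π a)
  | .halt => .halt

/-! ## Engines -/

/-- An engine: an interface together with a port map assigning code to (O-)port names. -/
structure Engine where
  iface : Interface
  code : PortName → Code

/-- Engine well-formedness: sparked ports are output (P-)ports of the interface. -/
def Engine.WF (E : Engine) : Prop :=
  ∀ a ∈ E.iface.oports, (E.code a).sparks ⊆ E.iface.pports

/-- Action of a port-name permutation on an engine. -/
def mapEngine (π : Equiv.Perm PortName) (E : Engine) : Engine :=
  ⟨mapIface π E.iface, fun a => (E.code (π.symm a)).rename π⟩

/-! ## Machine state -/

/-- Register files: `r` data registers. -/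
abbrev Regs (r : ℕ) := Fin r → Data

/-- Reading a register (`none` reads the null datum `d_∅`). -/
def Regs.get {r : ℕ} (d : Regs r) (i : Reg) : Data :=
  match i with
  | none => .null
  | some i => if h : i < r then d ⟨i, h⟩ else .null

/-- Updating a register (`none` ignores the write). -/
def Regs.set {r : ℕ} (d : Regs r) (i : Reg) (v : Data) : Regs r :=
  match i with
  | none => d
  | some i => fun j => if j.val = i then v else d j

/-- Messages: a port name and `rm` data items. -/
abbrev Msg (rm : ℕ) := PortName × (Fin rm → Data)

/-- `msg`: the first `rm` registers of a register file. -/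
def msgOf (rm : ℕ) {r : ℕ} (d : Regs r) : Fin rm → Data := fun i => d.get (some i.val)

/-- `regs`: pad a message's data with null registers. -/
def regsOf (r : ℕ) {rm : ℕ} (m : Fin rm → Data) : Regs r :=
  fun j => if h : j.val < rm then m ⟨j.val, h⟩ else .null

/-- Threads: a code fragment with `r` data registers. -/
abbrev Thread (r : ℕ) := Code × Regs r

/-- Heaps: finite partial maps from pointer names to pairs of a pointer name and a datum. -/
abbrev Heap := PtrName → Option (PtrName × Data)

def hset (h : Heap) (p : PtrName) (v : Option (PtrName × Data)) : Heap :=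
  fun q => if q = p then v else h q

/-- Engine configurations: a set of threads and a heap. -/
abbrev EConf (r : ℕ) := Finset (Thread r) × Heap

/-! ## Operational semantics of engines (Fig. 1) -/

/-- Labels: silent (`none`) or a polarised message. -/
abbrev Label (rm : ℕ) := Option (Pol × Msg rm)

inductive EStep (r rm : ℕ) (E : Engine) (χ : PortName → PortName) :
    EConf r → Label rm → EConf r → Prop
  | new {T : Finset (Thread r)} {h : Heap} {i j k : Reg} {c : Code} {d : Regs r}
      {p q : PtrName} (hj : d.get j = .ptr q) (hp : h p = none) :
      EStep r rm E χ (insert (.seq (.new i j k) c, d) T, h) none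
        (insert (c, d.set i (.ptr p)) T, hset h p (some (q, d.get k)))
  | get {T : Finset (Thread r)} {h : Heap} {i j k : Reg} {c : Code} {d : Regs r}
      {q v : PtrName} {w : Data} (hk : d.get k = .ptr q) (hq : h q = some (v, w)) :
      EStep r rm E χ (insert (.seq (.get i j k) c, d) T, h) none
        (insert (c, (d.set i (.ptr v)).set j w) T, h)
  | update {T : Finset (Thread r)} {h : Heap} {i j : Reg} {c : Code} {d : Regs r}
      {q v : PtrName} {w : Data} (hi : d.get i = .ptr q) (hq : h q = some (v, w)) :
      EStep r rm E χ (insert (.seq (.update i j) c, d) T, h) none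
        (insert (c, d) T, hset h q (some (v, d.get j)))
  | free {T : Finset (Thread r)} {h : Heap} {i : Reg} {c : Code} {d : Regs r}
      {q v : PtrName} {w : Data} (hi : d.get i = .ptr q) (hq : h q = some (v, w)) :
      EStep r rm E χ (insert (.seq (.free i) c, d) T, h) none
        (insert (c, d.set i .null) T, hset h q none)
  | flip {T : Finset (Thread r)} {h : Heap} {i j : Reg} {c : Code} {d : Regs r} :
      EStep r rm E χ (insert (.seq (.flip i j) c, d) T, h) none
        (insert (c, (d.set i (d.get j)).set j (d.get i)) T, h)
  | setr {T : Finset (Thread r)} {h : Heap} {i : Reg} {v : Data} {c : Code} {d : Regs r} :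
      EStep r rm E χ (insert (.seq (.set i v) c, d) T, h) none
        (insert (c, d.set i v) T, h)
  | ifzero_zero {T : Finset (Thread r)} {h : Heap} {i : Reg} {c₁ c₂ : Code} {d : Regs r}
      (hz : d.get i = .int 0) :
      EStep r rm E χ (insert (.ifzero i c₁ c₂, d) T, h) none
        (insert (c₁, d.set i .null) T, h)
  | ifzero_succ {T : Finset (Thread r)} {h : Heap} {i : Reg} {c₁ c₂ : Code} {d : Regs r}
      {n : ℕ} (hz : d.get i = .int (n + 1)) :
      EStep r rm E χ (insert (.ifzero i c₁ c₂, d) T, h) none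
        (insert (c₂, d.set i .null) T, h)
  | spark_out {T : Finset (Thread r)} {h : Heap} {a : PortName} {d : Regs r}
      (hout : χ a ∉ E.iface.oports) :
      EStep r rm E χ (insert (.spark a, d) T, h) (some (.P, (χ a, msgOf rm d))) (T, h)
  | spark_jump {T : Finset (Thread r)} {h : Heap} {a : PortName} {d : Regs r}
      (hin : χ a ∈ E.iface.oports) :
      EStep r rm E χ (insert (.spark a, d) T, h) none
        (insert (E.code (χ a), regsOf r (msgOf rm d)) T, h)
  | input {T : Finset (Thread r)} {h : Heap} {a : PortName} {m : Fin rm → Data}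
      (ha : a ∈ E.iface.oports) :
      EStep r rm E χ (T, h) (some (.O, (a, m))) (insert (E.code a, regsOf r m) T, h)
  | halt {T : Finset (Thread r)} {h : Heap} {d : Regs r} :
      EStep r rm E χ (insert (.halt, d) T, h) none (T, h)

/-! ## Nets -/

/-- An HRAM net: a set of engines, a connection function over port names,
and an external interface. -/
structure Net where
  engines : Multiset Engine
  χ : PortName → PortName
  iface : Interface

/-- O-port names of a net's engines. -/
def Net.engO (S : Net) : Finset PortName :=
  ((S.engines.map fun (E : Engine) => E.iface.oports.val).sum).toFinset

/-- P-port names of a net's engines. -/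
def Net.engP (S : Net) : Finset PortName :=
  ((S.engines.map fun (E : Engine) => E.iface.pports.val).sum).toFinset

/-- All port names of a net (external interface and engines). -/
def Net.allSup (S : Net) : Finset PortName := S.iface.sup ∪ S.engO ∪ S.engP

/-- Well-formedness of an HRAM net: the engines are well-formed, all port names
(of the external interface and of the engines) are pairwise distinct, and `χ` is
a bijection from the external O-ports and engine P-ports to the external P-ports
and engine O-ports. -/
structure Net.WF (S : Net) : Prop where
  iface_wf : S.iface.WF
  engines_iface_wf : ∀ E : Engine, E ∈ S.engines → E.iface.WF
  engines_wf : ∀ E : Engine, E ∈ S.engines → E.WF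
  sep : (S.iface.sup.val + (S.engines.map fun (E : Engine) => E.iface.sup.val).sum).Nodup
  bij : Set.BijOn S.χ ↑(S.iface.oports ∪ S.engP) ↑(S.iface.pports ∪ S.engO)

/-- Net configurations: an engine configuration for each engine, plus a finite
multiset of pending messages. -/
abbrev NetConf (r rm : ℕ) := Multiset (EConf r × Engine) × Multiset (Msg rm)

/-! ## Operational semantics of nets (Fig. 2, CHAM-style) -/

inductive NetStep (r rm : ℕ) (S : Net) : NetConf r rm → Label rm → NetConf r rm → Prop
  | eng {e e' : EConf r} {E : Engine} {rest : Multiset (EConf r × Engine)}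
      {msgs : Multiset (Msg rm)} (h : EStep r rm E S.χ e none e') :
      NetStep r rm S ((e, E) ::ₘ rest, msgs) none ((e', E) ::ₘ rest, msgs)
  | send {e e' : EConf r} {E : Engine} {rest : Multiset (EConf r × Engine)}
      {msgs : Multiset (Msg rm)} {m : Msg rm} (h : EStep r rm E S.χ e (some (.P, m)) e') :
      NetStep r rm S ((e, E) ::ₘ rest, msgs) none ((e', E) ::ₘ rest, m ::ₘ msgs)
  | recv {e e' : EConf r} {E : Engine} {rest : Multiset (EConf r × Engine)}
      {msgs : Multiset (Msg rm)} {m : Msg rm} (h : EStep r rm E S.χ e (some (.O, m)) e') :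
      NetStep r rm S ((e, E) ::ₘ rest, m ::ₘ msgs) none ((e', E) ::ₘ rest, msgs)
  | out {es : Multiset (EConf r × Engine)} {msgs : Multiset (Msg rm)}
      {a : PortName} {dm : Fin rm → Data} (ha : a ∈ S.iface.pports) :
      NetStep r rm S (es, (a, dm) ::ₘ msgs) (some (.P, (a, dm))) (es, msgs)
  | inp {es : Multiset (EConf r × Engine)} {msgs : Multiset (Msg rm)}
      {a : PortName} {dm : Fin rm → Data} (ha : a ∈ S.iface.oports) :
      NetStep r rm S (es, msgs) (some (.O, (a, dm))) (es, (S.χ a, dm) ::ₘ msgs)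

/-- The initial configuration: each engine with no threads and an empty heap,
and no pending messages. -/
def initConf (r rm : ℕ) (S : Net) : NetConf r rm :=
  (S.engines.map fun E => ((∅, fun _ => none), E), 0)

/-- Any number of silent net steps. -/
def Silents (r rm : ℕ) (S : Net) : NetConf r rm → NetConf r rm → Prop :=
  Relation.ReflTransGen (fun n n' => NetStep r rm S n none n')

/-- Traces: finite sequences of polarised messages. -/
abbrev PTrace (rm : ℕ) := List (Pol × Msg rm)

/-- `Run r rm S n s n'`: the observable transitions of `s` are performed in order,
with arbitrary interleaved silent steps, from `n` to `n'` (written `n ⟹^s n'`). -/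
inductive Run (r rm : ℕ) (S : Net) : NetConf r rm → PTrace rm → NetConf r rm → Prop
  | nil (n : NetConf r rm) : Run r rm S n [] n
  | cons {n n₁ n₂ n₃ : NetConf r rm} {α : Pol × Msg rm} {s : PTrace rm}
      (hs : Silents r rm S n n₁) (h : NetStep r rm S n₁ (some α) n₂)
      (ht : Run r rm S n₂ s n₃) : Run r rm S n (α :: s) n₃

/-- The denotation of a net: its set of observable traces. -/
def denot (r rm : ℕ) (S : Net) : Set (PTrace rm) :=
  {s | ∃ n, Run r rm S (initConf r rm S) s n}

/-! ## Operations on traces -/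

/-- Renaming the port names of a trace. -/
def mapPTrace {rm : ℕ} (π : Equiv.Perm PortName) (s : PTrace rm) : PTrace rm :=
  s.map fun α => (α.1, (π α.2.1, α.2.2))

/-- Deletion `s − X`: remove all messages whose port name lies in `X`. -/
def tdel {rm : ℕ} (s : PTrace rm) (X : Finset PortName) : PTrace rm :=
  s.filter fun α => decide (α.2.1 ∉ X)

/-- Traces over a set of port names. -/
def tracesOver (rm : ℕ) (X : Finset PortName) : Set (PTrace rm) :=
  {s | ∀ α ∈ s, α.2.1 ∈ X}

/-- Interleaving of sets of traces. -/
def interleaveT {rm : ℕ} (S₁ S₂ : Set (PTrace rm)) (X Y : Finset PortName) :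
    Set (PTrace rm) :=
  {s | s ∈ tracesOver rm (X ∪ Y) ∧ tdel s Y ∈ S₁ ∧ tdel s X ∈ S₂}

/-- `s^{*X}`: reverse the polarity of the messages with port names in `X`. -/
def dualOnP {rm : ℕ} (s : PTrace rm) (X : Finset PortName) : PTrace rm :=
  s.map fun α => if α.2.1 ∈ X then (α.1.dual, α.2) else α

/-- Synchronisation-and-hiding composition of sets of traces. -/
def composeT {rm : ℕ} (S₁ S₂ : Set (PTrace rm)) (XA XB XC : Finset PortName)
    (π : Equiv.Perm PortName) : Set (PTrace rm) :=
  {t | ∃ s ∈ tracesOver rm (XA ∪ XB ∪ XC),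
        t = tdel s XB ∧ tdel s XC ∈ S₁ ∧ tdel (mapPTrace π (dualOnP s XB)) XA ∈ S₂}

/-! ## The category HRAMnet -/

/-- The identity net `id_A : A → A'` (pure connectivity), for `π ⊢ A =_𝔸 A'`. -/
def idNet (A A' : Interface) (π : Equiv.Perm PortName) : Net :=
  { engines := 0
    χ := fun a => if a ∈ A.pports then π a else if a ∈ A'.oports then π.symm a else a
    iface := Interface.arrow A A' }

/-- Tensor of morphisms `f : A → B`, `g : C → D`. -/
def tensorNet (f g : Net) (A B C D : Interface) : Net :=
  { engines := f.engines + g.engines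
    χ := fun a => if a ∈ (A.pports ∪ B.oports) ∪ f.engP then f.χ a else g.χ a
    iface := Interface.arrow (A.tensor C) (B.tensor D) }

/-- Composition of morphisms `f : A → B` and `g : B' → C` with `π ⊢ B =_𝔸 B'`. -/
def compNet (f g : Net) (A B B' C : Interface) (π : Equiv.Perm PortName) : Net :=
  { engines := f.engines + g.engines
    χ := fun a =>
      if a ∈ A.pports ∪ f.engP then
        (if f.χ a ∈ B.sup then g.χ (π (f.χ a)) else f.χ a)
      else if a ∈ C.oports ∪ g.engP then
        (if g.χ a ∈ B'.sup then f.χ (π.symm (g.χ a)) else g.χ a)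
      else a
    iface := Interface.arrow A C }

/-- Equality of morphisms of HRAMnet: denotations agree up to a port-name permutation. -/
def DenEq (r rm : ℕ) (S₁ S₂ : Net) : Prop :=
  ∃ π : Equiv.Perm PortName, mapPTrace π '' denot r rm S₁ = denot r rm S₂

/-- `f` is a (well-formed) morphism `A → B` of HRAMnet. -/
def MorOn (f : Net) (A B : Interface) : Prop :=
  f.WF ∧ f.iface = Interface.arrow A B ∧ A.WF ∧ B.WF ∧ Disjoint A.sup B.sup

/-- Action of a port-name permutation on a net. -/
def mapNet (π : Equiv.Perm PortName) (S : Net) : Net :=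
  { engines := S.engines.map (mapEngine π)
    χ := fun a => π (S.χ (π.symm a))
    iface := mapIface π S.iface }

/-- Structural equivalence of nets (graph isomorphism along `π`). -/
def StructEquiv (π : Equiv.Perm PortName) (S₁ S₂ : Net) : Prop :=
  S₂.engines = S₁.engines.map (mapEngine π) ∧
  IfacePerm π S₁.iface S₂.iface ∧
  ∀ a ∈ S₁.iface.oports ∪ S₁.engP, S₂.χ (π a) = π (S₁.χ a)

end GameSem
namespace GameSem

/-! # Game nets

For game abstract machines the message size is `r_m = 3` and the register count is
`r = 4`; messages carry a port name, two pointer names (the two ends of a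
justification pointer) and a datum. -/

/-- A game-trace message `(l, a, p, p', d)`. -/
structure GMsg where
  l : Pol
  a : PortName
  p : PtrName
  p' : PtrName
  d : Data
deriving DecidableEq

/-- Game traces. -/
abbrev GTrace := List GMsg

/-- Renaming the port and pointer names of a message. -/
def GMsg.map (πa : Equiv.Perm PortName) (πp : Equiv.Perm PtrName) (m : GMsg) : GMsg :=
  ⟨m.l, πa m.a, πp m.p, πp m.p', m.d⟩

/-- Reversing the polarity of a message. -/
def GMsg.dual (m : GMsg) : GMsg := ⟨m.l.dual, m.a, m.p, m.p', m.d⟩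

def mapGTrace (πa : Equiv.Perm PortName) (πp : Equiv.Perm PtrName) (s : GTrace) : GTrace :=
  s.map (GMsg.map πa πp)

def dualGTrace (s : GTrace) : GTrace := s.map GMsg.dual

/-- Reverse the polarity of the messages with port names in `X`. -/
def dualOnG (s : GTrace) (X : Finset PortName) : GTrace :=
  s.map fun m => if m.a ∈ X then m.dual else m

/-- The game message `(l,a,p,p',d)` as a polarised net message. -/
def GMsg.toMsg (m : GMsg) : Pol × Msg 3 :=
  (m.l, (m.a, fun i => if i.val = 0 then .ptr m.p else if i.val = 1 then .ptr m.p' else m.d))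

/-- A game trace as a net trace. -/
def toP (s : GTrace) : PTrace 3 := s.map GMsg.toMsg

/-- Coabstracted (`cp`) and free (`fp`) pointers of a trace, computed left-to-right. -/
def cpfp (s : GTrace) : Finset PtrName × Finset PtrName :=
  s.foldl (fun X m => (insert m.p' X.1, if m.p ∈ X.1 then X.2 else insert m.p X.2)) (∅, ∅)

def cp (s : GTrace) : Finset PtrName := (cpfp s).1
def fp (s : GTrace) : Finset PtrName := (cpfp s).2
def ptrs (s : GTrace) : Finset PtrName := cp s ∪ fp s

/-! ## Game interfaces (arenas) -/

/-- A game interface: an interface, a partition of its port names into questions and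
answers, a set of initial (O-labelled question) port names, and an enabling relation. -/
structure GameIface where
  iface : Interface
  qst : Finset PortName
  ini : Finset PortName
  enables : PortName → PortName → Prop

namespace GameIface

/-- The answer port names. -/
def ans (G : GameIface) : Finset PortName := G.iface.sup \ G.qst

/-- Well-formedness of a game interface. -/
def WF (G : GameIface) : Prop :=
  G.iface.WF ∧ G.qst ⊆ G.iface.sup ∧ G.ini ⊆ G.qst ∧ G.ini ⊆ G.iface.oports ∧
  ∀ a a', G.enables a a' →
    a ∈ G.qst ∧ a' ∈ G.iface.sup ∧ a' ∉ G.ini ∧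
    ((a ∈ G.iface.oports ∧ a' ∈ G.iface.pports) ∨
     (a ∈ G.iface.pports ∧ a' ∈ G.iface.oports))

end GameIface

/-- Tensor of game interfaces. -/
def tensorG (G H : GameIface) : GameIface :=
  ⟨G.iface.tensor H.iface, G.qst ∪ H.qst, G.ini ∪ H.ini,
   fun a b => G.enables a b ∨ H.enables a b⟩

/-- Arrow of game interfaces `𝔄 ⇒ 𝔅`. -/
def arrowG (G H : GameIface) : GameIface :=
  ⟨G.iface.arrow H.iface, G.qst ∪ H.qst, H.ini,
   fun a b => G.enables a b ∨ H.enables a b ∨ (a ∈ H.ini ∧ b ∈ G.ini)⟩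

/-- Action of a port-name permutation on a game interface. -/
def mapGIface (π : Equiv.Perm PortName) (G : GameIface) : GameIface :=
  ⟨mapIface π G.iface, G.qst.image π, G.ini.image π,
   fun a b => G.enables (π.symm a) (π.symm b)⟩

/-- `π ⊢ 𝔄 =_𝔸 𝔅` for game interfaces. -/
def GIfacePerm (π : Equiv.Perm PortName) (G H : GameIface) : Prop :=
  IfacePerm π G.iface H.iface ∧ H.qst = G.qst.image π ∧ H.ini = G.ini.image π ∧
  ∀ a b, H.enables a b ↔ G.enables (π.symm a) (π.symm b)

/-! ## Legality conditions on game traces -/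

/-- The enabled (port, pointer) pairs after a trace. -/
def enabledSet (G : GameIface) (s : GTrace) : Set (PortName × PtrName) :=
  {x | ∃ m ∈ s, G.enables m.a x.1 ∧ x.2 = m.p'}

def UniquePtrs (s : GTrace) : Prop :=
  ∀ s₁ m s₂, s = s₁ ++ m :: s₂ → m.p' ∉ ptrs s₁

def CorrectlyLabelled (A : Interface) (s : GTrace) : Prop :=
  ∀ m ∈ s, (m.l = .O → m.a ∈ A.oports) ∧ (m.l = .P → m.a ∈ A.pports)

def Justified (G : GameIface) (s : GTrace) : Prop :=
  ∀ s₁ m s₂, s = s₁ ++ m :: s₂ → m.a ∉ G.ini → (m.a, m.p) ∈ enabledSet G s₁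

def WellOpened (G : GameIface) (s : GTrace) : Prop :=
  ∀ s₁ m s₂, s = s₁ ++ m :: s₂ → m.a ∈ G.ini → s₁ = []

def StrictlyScoped (G : GameIface) (s : GTrace) : Prop :=
  ∀ s₁ m s₂, s = s₁ ++ m :: s₂ → m.a ∈ G.ans → m.p ∉ fp s₂

def StrictlyNested (G : GameIface) (s : GTrace) : Prop :=
  ∀ s₀ m₁ s₁ m₂ s₂ m₃ s₃, s = s₀ ++ m₁ :: s₁ ++ m₂ :: s₂ ++ m₃ :: s₃ →
    m₁.a ∈ G.qst → m₂.a ∈ G.qst → m₃.a ∈ G.ans →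
    m₂.p = m₁.p' → m₃.p = m₁.p' →
    ∃ m₄ ∈ s₂, m₄.a ∈ G.ans ∧ m₄.p = m₂.p'

/-- `P_𝔄`: the legal traces over a game interface. -/
def Plegal (G : GameIface) : Set GTrace :=
  {s | UniquePtrs s ∧ CorrectlyLabelled G.iface s ∧ Justified G s ∧
       StrictlyScoped G s ∧ StrictlyNested G s}

def Alternating (s : GTrace) : Prop := s.Chain' fun m₁ m₂ => m₁.l ≠ m₂.l

/-- A question message is pending if it has not been answered. -/
def PendingQ (G : GameIface) (s : GTrace) (m : GMsg) : Prop :=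
  (∃ s₁ s₂, s = s₁ ++ m :: s₂ ∧ ∀ m' ∈ s₂, m'.a ∈ G.ans → m'.p ≠ m.p') ∧ m.a ∈ G.qst

/-! ## The saturation preorder -/

/-- The order `O ≤ O`, `O ≤ P`, `P ≤ P` on polarities. -/
def polLe (l₁ l₂ : Pol) : Prop := l₁ = .O ∨ l₂ = .P

/-- One swap: the trace with `m₁` earlier is `≼`-below the one with `m₂` earlier. -/
inductive SwapStep : GTrace → GTrace → Prop
  | mk (s₁ s₂ : GTrace) (m₁ m₂ : GMsg) (hl : polLe m₁.l m₂.l) (hp : m₁.p' ≠ m₂.p) :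
      SwapStep (s₁ ++ m₁ :: m₂ :: s₂) (s₁ ++ m₂ :: m₁ :: s₂)

/-- The preorder `≼` on traces. -/
def prec : GTrace → GTrace → Prop := Relation.ReflTransGen SwapStep

/-- A set of traces `S ⊆ P_𝔄` is saturated. -/
def Saturated (G : GameIface) (S : Set GTrace) : Prop :=
  ∀ s ∈ S, ∀ s' ∈ Plegal G, prec s' s → s' ∈ S

/-- The least saturated superset of `S` (within `P_𝔄`). -/
def sat (G : GameIface) (S : Set GTrace) : Set GTrace :=
  S ∪ {s' ∈ Plegal G | ∃ s ∈ S, prec s' s}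

/-! ## Hereditarily justified restriction and reindexing deletion -/

/-- Hereditarily justified restriction `s ↾ X`. -/
def restr (s : GTrace) (X : Finset PtrName) : GTrace × Finset PtrName :=
  s.foldl (fun acc m => if m.p ∈ acc.2 then (acc.1 ++ [m], insert m.p' acc.2) else acc)
    ([], X)

/-- Reindexing deletion `s ⇂ X`, returning the trace and the accumulated substitution. -/
def reindexDel (s : GTrace) (X : Finset PortName) : GTrace × (PtrName → PtrName) :=
  s.foldl (fun acc m =>
      if m.a ∈ X then (acc.1, Function.update acc.2 m.p' (acc.2 m.p))
      else (acc.1 ++ [{m with p := acc.2 m.p}], acc.2))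
    ([], id)

def rdel (s : GTrace) (X : Finset PortName) : GTrace := (reindexDel s X).1

/-- Game traces over an interface. -/
def gtracesOver (X : Finset PortName) : Set GTrace := {s | ∀ m ∈ s, m.a ∈ X}

/-- Game composition `S_f ;_G S_g` of sets of traces. -/
def gameComp (Sf Sg : Set GTrace) (XA XB XC : Finset PortName)
    (π : Equiv.Perm PortName) : Set GTrace :=
  {t | ∃ s ∈ gtracesOver (XA ∪ XB ∪ XC),
        t = rdel s XB ∧ rdel s XC ∈ Sf ∧
        rdel (mapGTrace π (Equiv.refl PtrName) (dualOnG s XB)) XA ∈ Sg}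

/-! ## GAM nets, implementation, P-closure -/

/-- `S₁` is P-closed with respect to `S₂`. -/
def PClosed (S₁ S₂ : Set (PTrace 3)) : Prop :=
  ∀ s' ∈ S₁ ∩ S₂, ∀ m : Msg 3, s' ++ [(Pol.P, m)] ∈ S₁ → s' ++ [(Pol.P, m)] ∈ S₂

/-- A GAM net `f` implements a set of game traces `S`. -/
def Implements (f : Net) (S : Set GTrace) : Prop :=
  toP '' S ⊆ denot 4 3 f ∧ PClosed (denot 4 3 f) (toP '' S)

/-- Closure of a strategy under pointer-name permutations, with ports renamed by `πa`. -/
def renCl (πa : Equiv.Perm PortName) (S : Set GTrace) : Set GTrace :=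
  {t | ∃ πp : Equiv.Perm PtrName, ∃ s ∈ S, t = mapGTrace πa πp s}

/-! ## Copycat -/

def cciC (k : Code) : Code :=
  .seq (.flip (some 0) (some 1)) (.seq (.new (some 1) (some 0) (some 3)) k)
def ccqC (k : Code) : Code :=
  .seq (.new (some 1) (some 1) (some 3)) (.seq (.get (some 0) (some 3) (some 0)) k)
def ccaC (k : Code) : Code :=
  .seq (.flip (some 0) (some 1))
    (.seq (.get (some 0) (some 3) (some 1)) (.seq (.free (some 1)) k))
def exiC (k : Code) : Code :=
  .seq (.get (some 0) (some 3) (some 0)) (.seq (.new (some 1) (some 1) (some 0)) k)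
def exqC (k : Code) : Code :=
  .seq (.get none (some 0) (some 0)) (.seq (.new (some 1) (some 1) (some 3)) k)

/-- The generalised copycat engine `CC_{C,π,𝔄}` on `A ⇒ A'` (`A' = π·A`), with initial
instruction `C`. -/
def ccEngine (C : Code → Code) (π : Equiv.Perm PortName) (G : GameIface) : Engine :=
  let A := G.iface
  let A' := mapIface π A
  { iface := A.arrow A'
    code := fun x =>
      if x ∈ A'.oports then
        (if x ∈ G.ini.image π then C (.spark (π.symm x))
         else if x ∈ G.qst.image π then ccqC (.spark (π.symm x))
         else ccaC (.spark (π.symm x)))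
      else if x ∈ A.pports then
        (if x ∈ G.qst then ccqC (.spark (π x)) else ccaC (.spark (π x)))
      else .halt }

/-- The singleton net of an engine: the engine (placed under an internal renaming `σ`),
wired to an external interface of the same shape. -/
def singletonNetExt (E₀ : Engine) (σ : Equiv.Perm PortName) : Net :=
  { engines := {mapEngine σ E₀}
    χ := fun a =>
      if a ∈ E₀.iface.oports then σ a
      else if a ∈ (mapIface σ E₀.iface).pports then σ.symm a
      else a
    iface := E₀.iface }

/-- The copycat GAM net `CC_{π,𝔄}` on external interface `A ⇒ π·A`. -/
def ccNet (C : Code → Code) (π σ : Equiv.Perm PortName) (G : GameIface) : Net :=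
  singletonNetExt (ccEngine C π G) σ

/-- Projection of a game trace to the messages at ports in `X`. -/
def projPorts (s : GTrace) (X : Finset PortName) : GTrace :=
  s.filter fun m => decide (m.a ∈ X)

/-- Core copycat condition relative to the exchanging renamings `πa`, `πp`:
every even-length prefix, dualised and restricted to the `A` side, is the
(`πa`,`πp`)-image of its restriction to the `A'` side. -/
def ccCore (G : GameIface) (π πa : Equiv.Perm PortName) (πp : Equiv.Perm PtrName) :
    Set GTrace :=
  {s | s ∈ Plegal (arrowG G (mapGIface π G)) ∧
       ∀ s', s' <+: s → Even s'.length →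
         mapGTrace πa πp (projPorts (dualGTrace s') G.iface.sup) =
           projPorts s' (mapIface π G.iface).sup}

/-- The single-threaded alternating copycat strategy `cc_{𝔄,π·𝔄}|st,alt`. -/
def ccStAlt (G : GameIface) (π πa : Equiv.Perm PortName) (πp : Equiv.Perm PtrName) :
    Set GTrace :=
  {s ∈ ccCore G π πa πp | WellOpened (arrowG G (mapGIface π G)) s ∧ Alternating s}

/-- The single-threaded (well-opened) copycat strategy `cc|st`. -/
def ccSt (G : GameIface) (π πa : Equiv.Perm PortName) (πp : Equiv.Perm PtrName) :
    Set GTrace :=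
  {s ∈ ccCore G π πa πp | WellOpened (arrowG G (mapGIface π G)) s}

/-- The saturated copycat strategy `cc_{𝔄,π·𝔄}` (relative to fixed renamings). -/
def ccSat (G : GameIface) (π πa : Equiv.Perm PortName) (πp : Equiv.Perm PtrName) :
    Set GTrace :=
  sat (arrowG G (mapGIface π G)) (ccStAlt G π πa πp)

/-- The saturated copycat strategy, up to (pointer- and port-) renamings. -/
def ccEx (G : GameIface) (π : Equiv.Perm PortName) : Set GTrace :=
  {s | ∃ πa πp, (∀ a ∈ G.iface.sup, πa a = π a) ∧ (∀ a, πa (πa a) = a) ∧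
       s ∈ ccSat G π πa πp}

/-- `πa` is an involution exchanging the two copies of the game (agreeing with `π`
on the original ports). -/
def ExchangesOn (πa π : Equiv.Perm PortName) (X : Finset PortName) : Prop :=
  (∀ a, πa (πa a) = a) ∧ ∀ a ∈ X, πa a = π a

/-- A copycat heap for a trace. -/
def CopycatHeap (πp : Equiv.Perm PtrName) (G : GameIface) (s : GTrace) (h : Heap) :
    Prop :=
  ∀ m : GMsg, PendingQ G s m → m.l = .P → h m.p' = some (πp m.p', .null)

/-- The messages a net configuration is ready to immediately send. -/
def ready (S : Net) (n : NetConf 4 3) : Set (Msg 3) :=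
  {m | ∃ n₁ n₂, Silents 4 3 S n n₁ ∧ NetStep 4 3 S n₁ (some (.P, m)) n₂}

/-! ## The composition operator K and mediated GAM composition -/

/-- Union of two engines (with disjoint supports): tensor of interfaces, union of
port maps. -/
def engineUnion (E₁ E₂ : Engine) : Engine :=
  ⟨E₁.iface.tensor E₂.iface, fun a => if a ∈ E₁.iface.sup then E₁.code a else E₂.code a⟩

/-- All the data needed to form the mediated composition `f ;_GAM g` by the
compact-closed combinators `Λ`, `Λ⁻¹` and the `K` engine. -/
structure GamCompData where
  (𝔄 𝔅 𝔅' ℭ : GameIface)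
  (f g : Net)
  (πB : Equiv.Perm PortName)
  -- data for Λ_A(f) = η_A ; (id_{A*} ⊗ f)
  (Aη Aη' A₁ A₁' : Interface)
  (πη π₁ πmf : Equiv.Perm PortName)
  -- data for Λ_{B'}(g)
  (Bη Bη' B₁ B₁' : Interface)
  (πηg π₁g πmg : Equiv.Perm PortName)
  -- data for K (working copies of the game interfaces and its internal copies)
  (𝔄K 𝔅K ℭK : GameIface)
  (σA σB σC : Equiv.Perm PortName)
  (πKA πKB πKC : Equiv.Perm PortName)
  (σK : Equiv.Perm PortName)
  (πmid : Equiv.Perm PortName)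
  -- data for Λ⁻¹ = (id ⊗ −) ; (ε ⊗ id)
  (Z₁ Z₁' W W' V V' : Interface)
  (ρ₁ ρε ρV ρm : Equiv.Perm PortName)

namespace GamCompData

/-- The `K_{𝔄,𝔅,ℭ}` engine: the union of an `exq`-copycat between `A'` and `A`, an
extended `exi`-copycat between `B` and `B'`, and a `cci`-copycat between `C` and `C'`. -/
def Kengine (d : GamCompData) : Engine :=
  engineUnion (ccEngine exqC d.πKA.symm (mapGIface d.πKA d.𝔄K))
    (engineUnion (ccEngine exiC d.πKB d.𝔅K) (ccEngine cciC d.πKC d.ℭK))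

def KA' (d : GamCompData) : Interface := mapIface d.πKA d.𝔄K.iface
def KC' (d : GamCompData) : Interface := mapIface d.πKC d.ℭK.iface

/-- The domain `(A ⇒ B) ⊗ (B' ⇒ C)` of `K` (in its working copies). -/
def Kdom (d : GamCompData) : Interface :=
  (d.𝔄K.iface.arrow d.𝔅K.iface).tensor ((mapIface d.πKB d.𝔅K.iface).arrow d.ℭK.iface)

/-- The codomain `A' ⇒ C'` of `K`. -/
def Kcod (d : GamCompData) : Interface := (d.KA').arrow (d.KC')

/-- `Λ_A(f) := η_A ; (id_{A*} ⊗ f) : ∅ → A₁'* ⊗ B`. -/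
def lamF (d : GamCompData) : Net :=
  compNet (idNet d.Aη d.Aη' d.πη)
    (tensorNet (idNet d.A₁.dual d.A₁'.dual d.π₁) d.f d.A₁.dual d.A₁'.dual
      d.𝔄.iface d.𝔅.iface)
    Interface.empty (d.Aη.dual.tensor d.Aη') (d.A₁.dual.tensor d.𝔄.iface)
    (d.A₁'.dual.tensor d.𝔅.iface) d.πmf

/-- `Λ_{B'}(g) : ∅ → B₁'* ⊗ C`. -/
def lamG (d : GamCompData) : Net :=
  compNet (idNet d.Bη d.Bη' d.πηg)
    (tensorNet (idNet d.B₁.dual d.B₁'.dual d.π₁g) d.g d.B₁.dual d.B₁'.dual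
      d.𝔅'.iface d.ℭ.iface)
    Interface.empty (d.Bη.dual.tensor d.Bη') (d.B₁.dual.tensor d.𝔅'.iface)
    (d.B₁'.dual.tensor d.ℭ.iface) d.πmg

/-- `(Λ_A(f) ⊗ Λ_{B'}(g)) ; K`. -/
def midNet (d : GamCompData) : Net :=
  compNet
    (tensorNet d.lamF d.lamG Interface.empty (d.A₁'.dual.tensor d.𝔅.iface)
      Interface.empty (d.B₁'.dual.tensor d.ℭ.iface))
    (singletonNetExt d.Kengine d.σK)
    Interface.empty
    ((d.A₁'.dual.tensor d.𝔅.iface).tensor (d.B₁'.dual.tensor d.ℭ.iface))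
    d.Kdom d.Kcod d.πmid

/-- The mediated composition `f ;_GAM g := Λ⁻¹_A((Λ_A(f) ⊗ Λ_B(g)) ; K_{𝔄,𝔅,ℭ})`. -/
def gamComp (d : GamCompData) : Net :=
  compNet
    (tensorNet (idNet d.Z₁ d.Z₁' d.ρ₁) d.midNet d.Z₁ d.Z₁' Interface.empty d.Kcod)
    (tensorNet (idNet d.W d.W' d.ρε) (idNet d.V d.V' d.ρV)
      (d.W.tensor d.W'.dual) Interface.empty d.V d.V')
    (d.Z₁.tensor Interface.empty)
    (d.Z₁'.tensor d.Kcod)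
    ((d.W.tensor d.W'.dual).tensor d.V)
    (Interface.empty.tensor d.V')
    d.ρm

/-- Well-formedness of the composition data: `f` and `g` are well-formed morphisms on
the given game interfaces, all the auxiliary interfaces are fresh same-shape copies as
required, and the resulting net is well-formed. -/
def WF (d : GamCompData) : Prop :=
  MorOn d.f d.𝔄.iface d.𝔅.iface ∧ MorOn d.g d.𝔅'.iface d.ℭ.iface ∧
  d.𝔄.WF ∧ d.𝔅.WF ∧ d.𝔅'.WF ∧ d.ℭ.WF ∧
  GIfacePerm d.πB d.𝔅 d.𝔅' ∧
  IfacePerm d.πη d.Aη d.Aη' ∧ IfacePerm d.π₁ d.A₁ d.A₁' ∧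
  IfacePerm d.πmf (d.Aη.dual.tensor d.Aη') (d.A₁.dual.tensor d.𝔄.iface) ∧
  IfacePerm d.πηg d.Bη d.Bη' ∧ IfacePerm d.π₁g d.B₁ d.B₁' ∧
  IfacePerm d.πmg (d.Bη.dual.tensor d.Bη') (d.B₁.dual.tensor d.𝔅'.iface) ∧
  GIfacePerm d.σA d.𝔄 d.𝔄K ∧ GIfacePerm d.σB d.𝔅 d.𝔅K ∧ GIfacePerm d.σC d.ℭ d.ℭK ∧
  IfacePerm d.πmid
    ((d.A₁'.dual.tensor d.𝔅.iface).tensor (d.B₁'.dual.tensor d.ℭ.iface)) d.Kdom ∧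
  IfacePerm d.ρ₁ d.Z₁ d.Z₁' ∧ IfacePerm d.ρε d.W d.W' ∧ IfacePerm d.ρV d.V d.V' ∧
  IfacePerm d.ρm (d.Z₁'.tensor d.Kcod) ((d.W.tensor d.W'.dual).tensor d.V) ∧
  d.gamComp.WF

/-- The external ports of `f ;_GAM g` are the copies `Z₁` of `A` and `V'` of `C`,
related to the originals by the port renaming `πAC`. -/
def OuterRen (d : GamCompData) (πAC : Equiv.Perm PortName) : Prop :=
  IfacePerm πAC d.𝔄.iface d.Z₁ ∧ IfacePerm πAC d.ℭ.iface d.V'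

end GamCompData

/-! ## Diagonal, sinks and projections -/

/-- The diagonal engine `δ_{π₁₂,π₁₃,𝔄}` on `A₁ ⇒ A₂ ⊗ A₃`. -/
def diagEngine (G : GameIface) (π12 π13 : Equiv.Perm PortName) : Engine :=
  let A₁ := G.iface
  let A₂ := mapIface π12 A₁
  let A₃ := mapIface π13 A₁
  { iface := (A₁.dual).tensor (A₂.tensor A₃)
    code := fun x =>
      if x ∈ A₁.pports then
        (if x ∈ G.qst then ccqC (.ifzero (some 3) (.spark (π12 x)) (.spark (π13 x)))
         else ccaC (.ifzero (some 3) (.spark (π12 x)) (.spark (π13 x))))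
      else if x ∈ A₂.oports then
        (if x ∈ G.ini.image π12 then
           .seq (.set (some 3) (.int 0)) (cciC (.spark (π12.symm x)))
         else if x ∈ G.qst.image π12 then ccqC (.spark (π12.symm x))
         else ccaC (.spark (π12.symm x)))
      else if x ∈ A₃.oports then
        (if x ∈ G.ini.image π13 then
           .seq (.set (some 3) (.int 1)) (cciC (.spark (π13.symm x)))
         else if x ∈ G.qst.image π13 then ccqC (.spark (π13.symm x))
         else ccaC (.spark (π13.symm x)))
      else .halt }

/-- The diagonal net. -/
def diagNet (G : GameIface) (π12 π13 σ : Equiv.Perm PortName) : Net :=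
  singletonNetExt (diagEngine G π12 π13) σ

/-- The sink engine `!_A : A → ∅`, whose code at every O-port is `end`. -/
def sinkEngine (A : Interface) : Engine := ⟨A.dual, fun _ => .halt⟩

/-- The sink net. -/
def sinkNet (A : Interface) (σ : Equiv.Perm PortName) : Net :=
  singletonNetExt (sinkEngine A) σ

/-- The projection net `Π₁ = id ⊗ ! : Ai ⊗ Aj → Ai'`. -/
def projNet (Ai Ai' Aj : Interface) (πi σ : Equiv.Perm PortName) : Net :=
  tensorNet (idNet Ai Ai' πi) (sinkNet Aj σ) Ai Ai' Aj Interface.empty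

end GameSem

namespace GameSem
/-- The projection net `Π₂ = ! ⊗ id : Aj ⊗ Ai → Ai'`. -/
def projNet2 (Aj Ai Ai' : Interface) (σ πi : Equiv.Perm PortName) : Net :=
  tensorNet (sinkNet Aj σ) (idNet Ai Ai' πi) Aj Interface.empty Ai Ai'
end GameSem

namespace GameSem

/-! ### Auxiliary material for Statement 9 -/

/-- The step function of the `cpfp` fold. -/
def pstep (X : Finset PtrName × Finset PtrName) (m : GMsg) :
    Finset PtrName × Finset PtrName :=
  (insert m.p' X.1, if m.p ∈ X.1 then X.2 else insert m.p X.2)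

lemma cpfp_eq_foldl (s : GTrace) : cpfp s = s.foldl pstep (∅, ∅) := rfl

/-- All pointer names (both fields) occurring in a trace. -/
def pnames (s : GTrace) : Finset PtrName :=
  (s.map GMsg.p').toFinset ∪ (s.map GMsg.p).toFinset

lemma mem_pnames {p : PtrName} {s : GTrace} :
    p ∈ pnames s ↔ ∃ m ∈ s, m.p' = p ∨ m.p = p := by
  simp only [pnames, Finset.mem_union, List.mem_toFinset, List.mem_map]
  constructor
  · rintro (⟨m, hm, h⟩ | ⟨m, hm, h⟩) <;> exact ⟨m, hm, by tauto⟩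
  · rintro ⟨m, hm, h | h⟩
    · exact Or.inl ⟨m, hm, h⟩
    · exact Or.inr ⟨m, hm, h⟩

lemma pnames_cons (m : GMsg) (s : GTrace) :
    pnames (m :: s) = insert m.p' (insert m.p (pnames s)) := by
  ext x
  simp only [mem_pnames, List.mem_cons, Finset.mem_insert]
  constructor
  · rintro ⟨m', rfl | hm', h⟩
    · tauto
    · exact Or.inr (Or.inr ⟨m', hm', h⟩)
  · rintro (rfl | rfl | h)
    · exact ⟨m, Or.inl rfl, Or.inl rfl⟩
    · exact ⟨m, Or.inl rfl, Or.inr rfl⟩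
    · obtain ⟨m', hm', h⟩ := mem_pnames.mp (by exact mem_pnames.mpr h)
      exact ⟨m', Or.inr hm', h⟩

lemma pstep_foldl_union (s : GTrace) :
    ∀ X : Finset PtrName × Finset PtrName,
      (s.foldl pstep X).1 ∪ (s.foldl pstep X).2 = X.1 ∪ X.2 ∪ pnames s := by
  induction s with
  | nil => intro X; simp [pnames]
  | cons m s ih =>
      intro X
      rw [List.foldl_cons, ih, pnames_cons]
      by_cases hp : m.p ∈ X.1 <;> ext x <;>
        simp only [pstep, if_pos, if_neg, hp, not_false_iff, Finset.mem_union,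
          Finset.mem_insert] <;>
      constructor
      · rintro (((rfl | h) | h) | h) <;> tauto
      · rintro ((h | h) | rfl | rfl | h) <;> tauto
      · rintro (((rfl | h) | rfl | h) | h) <;> tauto
      · rintro ((h | h) | rfl | rfl | h) <;> tauto

lemma ptrs_eq_pnames (s : GTrace) : ptrs s = pnames s := by
  have h := pstep_foldl_union s (∅, ∅)
  simpa [ptrs, cp, fp, cpfp_eq_foldl] using h

/-- The step function commutes for messages with the two disequalities. -/
lemma pstep_comm (X : Finset PtrName × Finset PtrName) (m₁ m₂ : GMsg)
    (h1 : m₁.p' ≠ m₂.p) (h2 : m₂.p' ≠ m₁.p) :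
    pstep (pstep X m₁) m₂ = pstep (pstep X m₂) m₁ := by
  unfold pstep
  simp only [Finset.mem_insert, Ne.symm h1, Ne.symm h2, false_or]
  refine Prod.ext (Finset.insert_comm _ _ _) ?_
  by_cases ha : m₁.p ∈ X.1 <;> by_cases hb : m₂.p ∈ X.1 <;>
    simp [ha, hb, Finset.insert_comm]

lemma cpfp_swap (s₁ s₂ : GTrace) (m₁ m₂ : GMsg)
    (h1 : m₁.p' ≠ m₂.p) (h2 : m₂.p' ≠ m₁.p) :
    cpfp (s₁ ++ m₁ :: m₂ :: s₂) = cpfp (s₁ ++ m₂ :: m₁ :: s₂) := by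
  simp only [cpfp_eq_foldl, List.foldl_append, List.foldl_cons]
  rw [pstep_comm _ _ _ h1 h2]

/-- The pairwise relation characterising unique pointers. -/
def UPrel (m m' : GMsg) : Prop := m'.p' ≠ m.p' ∧ m'.p' ≠ m.p

lemma uniquePtrs_iff_split (s : GTrace) :
    UniquePtrs s ↔ ∀ s₁ m s₂, s = s₁ ++ m :: s₂ → ∀ m' ∈ s₁, UPrel m' m := by
  unfold UniquePtrs
  constructor
  · intro h s₁ m s₂ hsplit m' hm'
    have := h s₁ m s₂ hsplit
    rw [ptrs_eq_pnames, mem_pnames] at this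
    push_neg at this
    have := this m' hm'
    exact ⟨fun e => this.1 e.symm, fun e => this.2 e.symm⟩
  · intro h s₁ m s₂ hsplit
    rw [ptrs_eq_pnames, mem_pnames]
    rintro ⟨m', hm', (he | he)⟩
    · exact (h s₁ m s₂ hsplit m' hm').1 he.symm
    · exact (h s₁ m s₂ hsplit m' hm').2 he.symm

lemma uniquePtrs_iff_pairwise (s : GTrace) :
    UniquePtrs s ↔ s.Pairwise UPrel := by
  rw [uniquePtrs_iff_split]
  induction s with
  | nil => simp
  | cons m s ih =>
      constructor
      · intro h
        rw [List.pairwise_cons]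
        constructor
        · intro m' hm'
          obtain ⟨a, b, rfl⟩ := List.append_of_mem hm'
          exact h (m :: a) m' b rfl m (by simp)
        · rw [← ih]
          intro s₁ m' s₂ hsplit m'' hm''
          exact h (m :: s₁) m' s₂ (by simp [hsplit]) m'' (by simp [hm''])
      · intro h s₁ m' s₂ hsplit m'' hm''
        rw [List.pairwise_cons] at h
        cases s₁ with
        | nil => simp at hm''
        | cons a s₁ =>
            simp only [List.cons_append, List.cons.injEq] at hsplit
            obtain ⟨rfl, hsplit⟩ := hsplit
            rcases List.mem_cons.mp hm'' with rfl | hm''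
            · exact h.1 m' (by rw [hsplit]; simp)
            · exact (ih.mpr h.2) s₁ m' s₂ hsplit m'' hm''

lemma pairwise_swap {s₁ s₂ : GTrace} {m₁ m₂ : GMsg} (hp : m₁.p' ≠ m₂.p)
    (h : List.Pairwise UPrel (s₁ ++ m₁ :: m₂ :: s₂)) :
    List.Pairwise UPrel (s₁ ++ m₂ :: m₁ :: s₂) := by
  simp only [List.pairwise_append, List.pairwise_cons, List.mem_cons] at h ⊢
  obtain ⟨h₁, ⟨hm₁, hm₂, h₂⟩, hcross⟩ := h
  have h12 : UPrel m₁ m₂ := hm₁ m₂ (Or.inl rfl)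
  refine ⟨h₁, ⟨?_, ?_, h₂⟩, ?_⟩
  · intro m hm
    rcases hm with rfl | hm
    · exact ⟨(h12.1).symm, hp⟩
    · exact hm₂ m hm
  · intro m hm
    exact hm₁ m (Or.inr hm)
  · intro a ha b hb
    rcases hb with hb | hb | hb
    · exact hcross a ha b (Or.inr (Or.inl hb))
    · exact hcross a ha b (Or.inl hb)
    · exact hcross a ha b (Or.inr (Or.inr hb))

lemma enabledSet_swap (G : GameIface) (s₁ s₂ : GTrace) (m₁ m₂ : GMsg) :
    enabledSet G (s₁ ++ m₁ :: m₂ :: s₂) = enabledSet G (s₁ ++ m₂ :: m₁ :: s₂) := by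
  ext x
  simp only [enabledSet, Set.mem_setOf_eq, List.mem_append, List.mem_cons]
  constructor <;> · rintro ⟨m, hm, h⟩; exact ⟨m, by tauto, h⟩

lemma prec_preserves_aux (G : GameIface) {s' s : GTrace} (h : prec s' s)
    (hu : UniquePtrs s') :
    enabledSet G s' = enabledSet G s ∧ cpfp s' = cpfp s ∧ UniquePtrs s := by
  induction h with
  | refl => exact ⟨rfl, rfl, hu⟩
  | tail hbc hstep ih =>
      obtain ⟨he, hc, hub⟩ := ih
      cases hstep with
      | mk s₁ s₂ m₁ m₂ hl hp =>
          -- hub : UniquePtrs (s₁ ++ m₁ :: m₂ :: s₂)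
          have h2 : m₂.p' ≠ m₁.p := by
            have hsplit : s₁ ++ m₁ :: m₂ :: s₂ = (s₁ ++ [m₁]) ++ m₂ :: s₂ := by simp
            have := hub (s₁ ++ [m₁]) m₂ s₂ hsplit
            rw [ptrs_eq_pnames, mem_pnames] at this
            push_neg at this
            exact fun e => (this m₁ (by simp)).2 e.symm
          refine ⟨he.trans (enabledSet_swap G s₁ s₂ m₁ m₂), hc.trans ?_, ?_⟩
          · exact cpfp_swap s₁ s₂ m₁ m₂ hp h2
          · rw [uniquePtrs_iff_pairwise] at hub ⊢
            exact pairwise_swap hp hub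

/-- Single swaps under `≼` preserve the enabling, coabstracted-pointer
and free-pointer data of a trace: if `s, s' ∈ P_𝔄` and `s' ≼ s`, then
`enabled_𝔄(s) = enabled_𝔄(s')`, `cp(s) = cp(s')` and `fp(s) = fp(s')`. -/
theorem swapping_preserves (G : GameIface) (hG : G.WF)
    (s s' : GTrace) (hs : s ∈ Plegal G) (hs' : s' ∈ Plegal G) (h : prec s' s) :
    enabledSet G s = enabledSet G s' ∧ cp s = cp s' ∧ fp s = fp s' := by
  obtain ⟨he, hc, -⟩ := prec_preserves_aux G h hs'.1
  exact ⟨he.symm, congrArg Prod.fst hc.symm, congrArg Prod.snd hc.symm⟩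

end GameSem
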